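/- Let A₀, Δ_A, Q be n×n real matrices with A := A₀ + Δ_A, let B be an n×m real matrix and R an m×m real matrix. Assume: Q and R are symmetric positive definite with Q − q·I_n ⪰ 0 for a real q > 0; ‖Δ_A‖ ≤ τ/s for reals τ ≥ 0 and s > 0; P̄₀ is a symmetric positive definite n×n matrix satisfying the nominal algebraic Riccati equation A₀ᵀ P̄₀ + P̄₀ A₀ + Q − P̄₀ B R⁻¹ Bᵀ P̄₀ = 0; K̄₀ := −R⁻¹ Bᵀ P̄₀; and τ < q·s/(2·tr(P̄₀)). Set ζ := q·s/(q·s − 2τ·tr(P̄₀)). Then: (i) A + B K̄₀ is Hurwitz (every eigenvalue of its complexification has strictly negative real part); and (ii) for every symmetric positive semidefinite n×n matrix W satisfying (A + B K̄₀) W + W (A + B K̄₀)ᵀ + I_n = 0, tr((Q + K̄₀ᵀ R K̄₀) W) ≤ ζ·tr(P̄₀). -/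

import Mathlib

open Matrix
open scoped Matrix.Norms.L2Operator

/-- A real square matrix is Hurwitz if every eigenvalue of its complexification
has strictly negative real part. -/
def Matrix.IsHurwitz {n : ℕ} (A : Matrix (Fin n) (Fin n) ℝ) : Prop :=
  ∀ μ ∈ spectrum ℂ (A.map (Complex.ofReal)), μ.re < 0

/-!
By the Riccati equation, `P₀` is a Lyapunov matrix for the nominal closed loop `A₀ + B K₀` with
cost `Q + K₀ᵀ R K₀`; for the true closed loop it is still one, with the cost lowered by
`S = ΔAᵀ P₀ + P₀ ΔA`. As `‖S‖ ≤ 2 ‖ΔA‖ ‖P₀‖ ≤ 2 (τ / s) tr P₀ =: c < q`, the perturbed cost `M`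
satisfies `M ⪰ (q - c) I ≻ 0`. An eigenvector `v` of the closed loop for `μ` then gives
`2 Re μ · v*P₀v = -v*Mv < 0`, so the closed loop is Hurwitz. For the Gramian `W`,
`tr (M W) = tr P₀` bounds `(q - c) tr W ≤ tr P₀`, hence
`tr ((M + S) W) ≤ tr P₀ + c tr W ≤ q / (q - c) · tr P₀ = ζ tr P₀`.
-/

open scoped MatrixOrder

namespace Matrix

open scoped ComplexOrder

section Lyapunov

variable {n m α : Type*} [Fintype n] [DecidableEq n] [CommRing α]

theorem lyapunov_add {A P M : Matrix n n α} (h : Aᵀ * P + P * A + M = 0) (D : Matrix n n α) :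
    (A + D)ᵀ * P + P * (A + D) + (M - (Dᵀ * P + P * D)) = 0 := by
  rw [← h, transpose_add]
  noncomm_ring

theorem trace_mul_eq_trace_of_lyapunov {A P M W : Matrix n n α} (hP : Aᵀ * P + P * A + M = 0)
    (hW : A * W + W * Aᵀ + 1 = 0) : (M * W).trace = P.trace := by
  calc (M * W).trace = -((Aᵀ * P + P * A) * W).trace := by
        rw [eq_neg_of_add_eq_zero_right hP, neg_mul, trace_neg]
    _ = -(P * (A * W + W * Aᵀ)).trace := by
        rw [add_mul, mul_add, trace_add, trace_add, ← mul_assoc P W, trace_mul_cycle P W,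
          add_comm, mul_assoc P A]
    _ = P.trace := by rw [eq_neg_of_add_eq_zero_left hW, mul_neg, mul_one, trace_neg, neg_neg]

theorem lyapunov_closedLoop_of_riccati [Fintype m] [DecidableEq m] {A P Q : Matrix n n α}
    {B : Matrix n m α} {R : Matrix m m α} {K : Matrix m n α} (hP : Pᵀ = P) (hR : Rᵀ = R)
    (hRdet : IsUnit R.det) (hARE : Aᵀ * P + P * A + Q - P * B * R⁻¹ * Bᵀ * P = 0)
    (hK : K = -(R⁻¹ * Bᵀ * P)) :
    (A + B * K)ᵀ * P + P * (A + B * K) + (Q + Kᵀ * R * K) = 0 := by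
  have hRR : R * R⁻¹ = 1 := mul_nonsing_inv R hRdet
  have hKt : Kᵀ = -(P * B * R⁻¹) := by
    simp only [hK, transpose_neg, transpose_mul, transpose_transpose, transpose_nonsing_inv, hR,
      hP, Matrix.mul_assoc]
  have hKRK : Kᵀ * R * K = P * B * R⁻¹ * Bᵀ * P := by
    rw [hKt, hK]
    simp only [Matrix.neg_mul, Matrix.mul_neg, neg_neg, Matrix.mul_assoc]
    rw [← Matrix.mul_assoc R, hRR, Matrix.one_mul]
  have hBK : P * (B * K) = -(P * B * R⁻¹ * Bᵀ * P) := by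
    simp only [hK, Matrix.mul_neg, Matrix.mul_assoc]
  have hKB : Kᵀ * (Bᵀ * P) = -(P * B * R⁻¹ * Bᵀ * P) := by
    simp only [hKt, Matrix.neg_mul, Matrix.mul_assoc]
  rw [transpose_add, transpose_mul, add_mul, mul_add, Matrix.mul_assoc Kᵀ, hKB, hBK, hKRK, ← hARE]
  abel

end Lyapunov

theorem map_ofReal_transpose {n m : Type*} (A : Matrix n m ℝ) :
    Aᵀ.map Complex.ofReal = (A.map Complex.ofReal)ᴴ := by
  rw [← conjTranspose_eq_transpose_of_trivial, conjTranspose_map _ fun _ => by simp]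

theorem PosSemidef.transpose_eq {n : Type*} {P : Matrix n n ℝ} (hP : P.PosSemidef) : Pᵀ = P := by
  simpa only [conjTranspose_eq_transpose_of_trivial] using hP.1.eq

section Real

variable {n : Type*} [Fintype n] [DecidableEq n]

theorem IsHermitian.le_l2_opNorm_smul_one {S : Matrix n n ℝ} (hS : S.IsHermitian) :
    S ≤ ‖S‖ • 1 := by
  cases isEmpty_or_nonempty n
  · exact (Subsingleton.elim _ _).le
  rw [← Algebra.algebraMap_eq_smul_one]
  exact le_algebraMap_of_spectrum_le
    (fun r hr => (Real.le_norm_self r).trans (spectrum.norm_le_norm_of_mem hr)) hS.isSelfAdjoint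

theorem PosSemidef.l2_opNorm_le_trace {P : Matrix n n ℝ} (hP : P.PosSemidef) :
    ‖P‖ ≤ P.trace := by
  have heig := hP.eigenvalues_nonneg
  rw [hP.1.trace_eq_sum_eigenvalues]
  conv_lhs => rw [hP.1.spectral_theorem]
  rw [Unitary.conjStarAlgAut_apply,
    CStarRing.norm_mul_mem_unitary _ (Unitary.star_mem (SetLike.coe_mem _)),
    CStarRing.norm_mem_unitary_mul _ (SetLike.coe_mem _), l2_opNorm_diagonal]
  refine (pi_norm_le_iff_of_nonneg (Finset.sum_nonneg fun i _ => heig i)).2 fun i => ?_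
  simpa [abs_of_nonneg (heig i)] using Finset.single_le_sum (fun j _ => heig j) (Finset.mem_univ i)

theorem PosSemidef.transpose_mul_add_mul_le {P : Matrix n n ℝ} (hP : P.PosSemidef)
    (D : Matrix n n ℝ) : Dᵀ * P + P * D ≤ (2 * ‖D‖ * P.trace) • 1 := by
  have hsymm : (Dᵀ * P + P * D).IsHermitian := by
    simp only [IsHermitian, conjTranspose_eq_transpose_of_trivial, transpose_add, transpose_mul,
      transpose_transpose, hP.transpose_eq, add_comm]
  have hD : ‖Dᵀ‖ = ‖D‖ := by
    rw [← conjTranspose_eq_transpose_of_trivial, l2_opNorm_conjTranspose]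
  have hnorm : ‖Dᵀ * P + P * D‖ ≤ 2 * ‖D‖ * P.trace :=
    calc ‖Dᵀ * P + P * D‖ ≤ ‖Dᵀ‖ * ‖P‖ + ‖P‖ * ‖D‖ :=
          (norm_add_le _ _).trans (add_le_add (l2_opNorm_mul _ _) (l2_opNorm_mul _ _))
      _ = 2 * ‖D‖ * ‖P‖ := by rw [hD]; ring
      _ ≤ 2 * ‖D‖ * P.trace := by gcongr; exact hP.l2_opNorm_le_trace
  exact hsymm.le_l2_opNorm_smul_one.trans (smul_le_smul_of_nonneg_right hnorm zero_le_one)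

theorem trace_mul_nonneg {A B : Matrix n n ℝ} (hA : A.PosSemidef) (hB : B.PosSemidef) :
    0 ≤ (A * B).trace := by
  obtain ⟨y, rfl⟩ := CStarAlgebra.nonneg_iff_eq_star_mul_self.mp hB.nonneg
  rw [← mul_assoc, trace_mul_comm, ← mul_assoc, star_eq_conjTranspose]
  exact (hA.mul_mul_conjTranspose_same y).trace_nonneg

theorem trace_mul_le_trace_mul_of_le {A B W : Matrix n n ℝ} (hAB : A ≤ B) (hW : W.PosSemidef) :
    (A * W).trace ≤ (B * W).trace := by
  simpa [sub_mul] using trace_mul_nonneg hAB hW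

theorem trace_mul_le_of_lyapunov {A P M S W : Matrix n n ℝ} {c d : ℝ}
    (hP : Aᵀ * P + P * A + M = 0) (hW : A * W + W * Aᵀ + 1 = 0) (hW0 : W.PosSemidef)
    (hd : 0 < d) (hc : 0 ≤ c) (hM : d • 1 ≤ M) (hS : S ≤ c • 1) :
    ((M + S) * W).trace ≤ (d + c) / d * P.trace := by
  have hMW := trace_mul_eq_trace_of_lyapunov hP hW
  have hdW := trace_mul_le_trace_mul_of_le hM hW0
  have hcW := trace_mul_le_trace_mul_of_le hS hW0
  simp only [smul_mul, one_mul, trace_smul, smul_eq_mul] at hdW hcW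
  rw [add_mul, trace_add, hMW, div_mul_eq_mul_div, le_div_iff₀ hd]
  nlinarith

theorem PosSemidef.map_ofReal {M : Matrix n n ℝ} (hM : M.PosSemidef) :
    (M.map Complex.ofReal).PosSemidef := by
  obtain ⟨y, rfl⟩ := CStarAlgebra.nonneg_iff_eq_star_mul_self.mp hM.nonneg
  rw [star_eq_conjTranspose, conjTranspose_eq_transpose_of_trivial]
  change ((yᵀ * y).map Complex.ofRealHom).PosSemidef
  rw [Matrix.map_mul]
  exact map_ofReal_transpose y ▸ posSemidef_conjTranspose_mul_self _

theorem PosDef.map_ofReal {M : Matrix n n ℝ} (hM : M.PosDef) :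
    (M.map Complex.ofReal).PosDef := by
  refine hM.posSemidef.map_ofReal.posDef_iff_isUnit.mpr ?_
  rw [isUnit_iff_isUnit_det]
  exact RingHom.map_det Complex.ofRealHom M ▸ hM.det_pos.ne'.isUnit.map Complex.ofRealHom

end Real

theorem re_lt_zero_of_mem_spectrum_of_lyapunov {n : Type*} [Fintype n] [DecidableEq n]
    {A P M : Matrix n n ℂ} (hP : P.PosSemidef) (hM : M.PosDef) (h : Aᴴ * P + P * A + M = 0)
    {μ : ℂ} (hμ : μ ∈ spectrum ℂ A) : μ.re < 0 := by
  rw [← spectrum_toLin', ← Module.End.hasEigenvalue_iff_mem_spectrum] at hμ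
  obtain ⟨v, hv⟩ := hμ.exists_hasEigenvector
  have hAv : A *ᵥ v = μ • v := by simpa using hv.apply_eq_smul
  have key : (starRingEnd ℂ μ + μ) * (star v ⬝ᵥ (P *ᵥ v)) = -(star v ⬝ᵥ (M *ᵥ v)) := by
    have := congrArg (fun X => star v ⬝ᵥ (X *ᵥ v)) h
    simp only [add_mulVec, ← mulVec_mulVec, dotProduct_add, hAv, zero_mulVec,
      dotProduct_zero] at this
    rw [dotProduct_mulVec, vecMul_conjTranspose, star_star, hAv, mulVec_smul, star_smul,
      smul_dotProduct, dotProduct_smul] at this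
    simp only [smul_eq_mul, RCLike.star_def] at this
    linear_combination this
  have hPv := hP.re_dotProduct_nonneg v
  have hMv := hM.re_dotProduct_pos hv.2
  have hre := congrArg Complex.re key
  simp only [RCLike.re_to_complex] at hPv hMv
  simp only [Complex.mul_re, Complex.add_re, Complex.conj_re, Complex.add_im, Complex.conj_im,
    neg_add_cancel, zero_mul, sub_zero, Complex.neg_re] at hre
  by_contra! hμ0
  nlinarith [mul_nonneg hμ0 hPv]

theorem isHurwitz_of_lyapunov {k : ℕ} {A P M : Matrix (Fin k) (Fin k) ℝ} (hP : P.PosSemidef)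
    (hM : M.PosDef) (h : Aᵀ * P + P * A + M = 0) : A.IsHurwitz := by
  refine fun μ => re_lt_zero_of_mem_spectrum_of_lyapunov hP.map_ofReal hM.map_ofReal ?_
  have := congrArg Complex.ofRealHom.mapMatrix h
  simp only [map_add, map_mul, map_zero, RingHom.mapMatrix_apply] at this
  rwa [← map_ofReal_transpose]

end Matrix

theorem certainty_equivalence_lqr_robust_noise_general {n m : ℕ}
    (A₀ ΔA Q : Matrix (Fin n) (Fin n) ℝ)
    (B : Matrix (Fin n) (Fin m) ℝ)
    (R : Matrix (Fin m) (Fin m) ℝ)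
    (q : ℝ)
    (hR : R.PosDef)
    (hQq : (Q - q • (1 : Matrix (Fin n) (Fin n) ℝ)).PosSemidef)
    (τ s : ℝ) (hτ : 0 ≤ τ) (hs : 0 < s) (hΔA : ‖ΔA‖ ≤ τ / s)
    (P₀ : Matrix (Fin n) (Fin n) ℝ) (hP₀ : P₀.PosDef)
    (hARE : A₀ᵀ * P₀ + P₀ * A₀ + Q - P₀ * B * R⁻¹ * Bᵀ * P₀ = 0)
    (K₀ : Matrix (Fin m) (Fin n) ℝ) (hK₀ : K₀ = -(R⁻¹ * Bᵀ * P₀))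
    (hτsmall : τ < q * s / (2 * P₀.trace))
    (ζ : ℝ) (hζ : ζ = q * s / (q * s - 2 * τ * P₀.trace)) :
    ((A₀ + ΔA) + B * K₀).IsHurwitz ∧
      ∀ W : Matrix (Fin n) (Fin n) ℝ, W.PosSemidef →
        ((A₀ + ΔA) + B * K₀) * W + W * ((A₀ + ΔA) + B * K₀)ᵀ + 1 = 0 →
        ((Q + K₀ᵀ * R * K₀) * W).trace ≤ ζ * P₀.trace := by
  set S := ΔAᵀ * P₀ + P₀ * ΔA
  set c := 2 * (τ / s) * P₀.trace
  have htr : 0 < P₀.trace := hP₀.posSemidef.trace_nonneg.lt_of_ne fun h => by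
    rw [← h, mul_zero, div_zero] at hτsmall
    linarith
  have hc : 0 ≤ c := by positivity
  have hcq : c < q := by
    rw [lt_div_iff₀ (by positivity)] at hτsmall
    rw [show c = 2 * τ * P₀.trace / s by ring, div_lt_iff₀ hs]
    linarith
  have hS : S ≤ c • 1 := (hP₀.posSemidef.transpose_mul_add_mul_le ΔA).trans
    (smul_le_smul_of_nonneg_right (by unfold c; gcongr) zero_le_one)
  have hKRK : 0 ≤ K₀ᵀ * R * K₀ := by
    simpa [conjTranspose_eq_transpose_of_trivial] using
      (hR.posSemidef.conjTranspose_mul_mul_same K₀).nonneg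
  have hM : (q - c) • 1 ≤ Q + K₀ᵀ * R * K₀ - S := by
    simpa [sub_smul] using sub_le_sub (add_le_add (le_iff.mpr hQq) hKRK) hS
  have hL : (A₀ + ΔA + B * K₀)ᵀ * P₀ + P₀ * (A₀ + ΔA + B * K₀) + (Q + K₀ᵀ * R * K₀ - S) = 0 := by
    rw [add_right_comm A₀]
    exact lyapunov_add (lyapunov_closedLoop_of_riccati hP₀.posSemidef.transpose_eq
      hR.posSemidef.transpose_eq hR.det_pos.ne'.isUnit hARE hK₀) ΔA
  have hMpos : (Q + K₀ᵀ * R * K₀ - S).PosDef := by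
    simpa using (PosDef.one.smul (sub_pos.mpr hcq)).posSemidef_add hM
  refine ⟨isHurwitz_of_lyapunov hP₀.posSemidef hMpos hL, fun W hW hWeq => ?_⟩
  have hcost := trace_mul_le_of_lyapunov hL hWeq hW (sub_pos.mpr hcq) hc hM hS
  rw [sub_add_cancel, sub_add_cancel] at hcost
  convert hcost using 2
  rw [hζ]
  unfold c
  field_simp

/-- Proposition 2: robustness of the certainty-equivalence LQR controller to
measurement noise: the gain `K̄₀` stabilizes the true system `A = A₀ + Δ_A`
and the LQR cost satisfies `tr((Q + K̄₀ᵀ R K̄₀) W) ≤ ζ tr(P̄₀)`. -/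
theorem certainty_equivalence_lqr_robust_noise {n m : ℕ}
    (A₀ ΔA Q : Matrix (Fin n) (Fin n) ℝ)
    (B : Matrix (Fin n) (Fin m) ℝ)
    (R : Matrix (Fin m) (Fin m) ℝ)
    (q : ℝ) (hq : 0 < q)
    (hQ : Q.PosDef) (hR : R.PosDef)
    (hQq : (Q - q • (1 : Matrix (Fin n) (Fin n) ℝ)).PosSemidef)
    (τ s : ℝ) (hτ : 0 ≤ τ) (hs : 0 < s) (hΔA : ‖ΔA‖ ≤ τ / s)
    (P₀ : Matrix (Fin n) (Fin n) ℝ) (hP₀ : P₀.PosDef)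
    (hARE : A₀ᵀ * P₀ + P₀ * A₀ + Q - P₀ * B * R⁻¹ * Bᵀ * P₀ = 0)
    (K₀ : Matrix (Fin m) (Fin n) ℝ) (hK₀ : K₀ = -(R⁻¹ * Bᵀ * P₀))
    (hτsmall : τ < q * s / (2 * P₀.trace))
    (ζ : ℝ) (hζ : ζ = q * s / (q * s - 2 * τ * P₀.trace)) :
    ((A₀ + ΔA) + B * K₀).IsHurwitz ∧
      ∀ W : Matrix (Fin n) (Fin n) ℝ, W.PosSemidef →
        ((A₀ + ΔA) + B * K₀) * W + W * ((A₀ + ΔA) + B * K₀)ᵀ + 1 = 0 →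
        ((Q + K₀ᵀ * R * K₀) * W).trace ≤ ζ * P₀.trace :=
  certainty_equivalence_lqr_robust_noise_general A₀ ΔA Q B R q hR hQq τ s hτ hs hΔA P₀ hP₀ hARE K₀
    hK₀ hτsmall ζ hζ
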